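/- Let r ≤ min(d₁, d₂) with r ≥ 1, and let M, M̂ = M + Δ be d₁×d₂ real matrices. Suppose U ∈ ℝ^{d₁×r}, U⊥ ∈ ℝ^{d₁×(d₁−r)}, V ∈ ℝ^{d₂×r}, V⊥ ∈ ℝ^{d₂×(d₂−r)} are such that [U, U⊥] and [V, V⊥] are orthogonal matrices, and M = U A Vᵀ + U⊥ B V⊥ᵀ for some A ∈ ℝ^{r×r}, B ∈ ℝ^{(d₁−r)×(d₂−r)} with ‖A x‖ ≥ λ_r ‖x‖ for all x ∈ ℝ^r (i.e. every singular value of A is at least λ_r). Likewise suppose Û, Û⊥, V̂, V̂⊥ form orthogonal matrices [Û, Û⊥], [V̂, V̂⊥] and M̂ = Û Â V̂ᵀ + Û⊥ B̂ V̂⊥ᵀ with ‖Â x‖ ≥ ‖B̂‖₂ ‖x‖ for all x ∈ ℝ^r. Write λ̂ = ‖B̂‖₂, ε₁ = ‖Uᵀ Δ V̂⊥‖₂, ε₂ = ‖Û⊥ᵀ Δ V‖₂, and assume λ_r > λ̂. Then ‖U⊥ᵀ Û‖₂ ≤ (λ̂ ε₁ + λ_r ε₂) / (λ_r² − λ̂²)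 ≤ max(ε₁, ε₂) / (λ_r − λ̂). (Lemma B.2 of the paper, an improvement of Wedin's sin Θ perturbation bound, stated for the spectral norm.) -/

import Mathlib

/-!
Projecting the two decompositions onto each other gives `A (Vᵀ V̂⊥) = Uᵀ Û⊥ B̂ - Uᵀ Δ V̂⊥`, and the
same identity for the transposed decompositions gives `Aᵀ (Uᵀ Û⊥) = Vᵀ V̂⊥ B̂ᵀ - Vᵀ Δᵀ Û⊥`.
Since `A` and `Aᵀ` are bounded below by `λr`, the numbers `x = ‖Uᵀ Û⊥‖` and `y = ‖Vᵀ V̂⊥‖`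
satisfy `λr y ≤ λ̂ x + ε₁` and `λr x ≤ λ̂ y + ε₂`, and eliminating `y` bounds `x`.
Finally `‖U⊥ᵀ Û‖ ≤ ‖Û⊥ᵀ U‖ = x`.
-/

open scoped Matrix Matrix.Norms.L2Operator

open Matrix
open scoped InnerProductSpace

namespace Matrix

variable {m n p q r s p' q' : Type*}

lemma toEuclideanLin_mul_apply [Fintype n] [DecidableEq n] [Fintype p] [DecidableEq p]
    (A : Matrix m n ℝ) (B : Matrix n p ℝ) (x : EuclideanSpace ℝ p) :
    toEuclideanLin (A * B) x = toEuclideanLin A (toEuclideanLin B x) := by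
  rw [toLpLin_mul_same]
  rfl

lemma inner_toEuclideanLin_transpose [Fintype m] [DecidableEq m] [Fintype n] [DecidableEq n]
    (A : Matrix m n ℝ) (x : EuclideanSpace ℝ n) (y : EuclideanSpace ℝ m) :
    ⟪toEuclideanLin Aᵀ y, x⟫_ℝ = ⟪y, toEuclideanLin A x⟫_ℝ := by
  rw [← conjTranspose_eq_transpose_of_trivial, toEuclideanLin_conjTranspose_eq_adjoint,
    LinearMap.adjoint_inner_left]

lemma norm_toEuclideanLin_sq [Fintype m] [DecidableEq m] [Fintype n] [DecidableEq n]
    (A : Matrix m n ℝ) (x : EuclideanSpace ℝ n) :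
    ‖toEuclideanLin A x‖ ^ 2 = ⟪toEuclideanLin (Aᵀ * A) x, x⟫_ℝ := by
  rw [toEuclideanLin_mul_apply, inner_toEuclideanLin_transpose, real_inner_self_eq_norm_sq]

lemma norm_toEuclideanLin_of_transpose_mul_self [Fintype m] [DecidableEq m] [Fintype n]
    [DecidableEq n] {W : Matrix m n ℝ} (hW : Wᵀ * W = 1) (x : EuclideanSpace ℝ n) :
    ‖toEuclideanLin W x‖ = ‖x‖ := by
  have h : ‖toEuclideanLin W x‖ ^ 2 = ‖x‖ ^ 2 := by
    rw [norm_toEuclideanLin_sq, hW, toLpLin_one, LinearMap.id_apply, real_inner_self_eq_norm_sq]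
  exact (sq_eq_sq₀ (norm_nonneg _) (norm_nonneg _)).1 h

lemma norm_toEuclideanLin_transpose_sq_add [Fintype m] [DecidableEq m] [Fintype n]
    [DecidableEq n] [Fintype p] [DecidableEq p] {U : Matrix m n ℝ} {Up : Matrix m p ℝ}
    (h : U * Uᵀ + Up * Upᵀ = 1) (y : EuclideanSpace ℝ m) :
    ‖toEuclideanLin Uᵀ y‖ ^ 2 + ‖toEuclideanLin Upᵀ y‖ ^ 2 = ‖y‖ ^ 2 := by
  rw [norm_toEuclideanLin_sq, norm_toEuclideanLin_sq, transpose_transpose, transpose_transpose,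
    ← inner_add_left, ← LinearMap.add_apply, ← map_add, h, toLpLin_one, LinearMap.id_apply,
    real_inner_self_eq_norm_sq]

lemma norm_toEuclideanLin_transpose_mul_sq_add [Fintype m] [DecidableEq m] [Fintype n]
    [DecidableEq n] [Fintype p] [DecidableEq p] [Fintype q] [DecidableEq q]
    {U : Matrix m n ℝ} {Up : Matrix m p ℝ} {W : Matrix m q ℝ}
    (h : U * Uᵀ + Up * Upᵀ = 1) (hW : Wᵀ * W = 1) (v : EuclideanSpace ℝ q) :
    ‖toEuclideanLin (Uᵀ * W) v‖ ^ 2 + ‖toEuclideanLin (Upᵀ * W) v‖ ^ 2 = ‖v‖ ^ 2 := by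
  rw [toEuclideanLin_mul_apply, toEuclideanLin_mul_apply, norm_toEuclideanLin_transpose_sq_add h,
    norm_toEuclideanLin_of_transpose_mul_self hW]

lemma norm_toEuclideanLin_le [Fintype m] [Fintype n] [DecidableEq n]
    (A : Matrix m n ℝ) (x : EuclideanSpace ℝ n) :
    ‖toEuclideanLin A x‖ ≤ ‖A‖ * ‖x‖ :=
  A.l2_opNorm_mulVec x

lemma l2_opNorm_le_of_forall [Fintype m] [Fintype n] [DecidableEq n] {A : Matrix m n ℝ} {c : ℝ}
    (hc : 0 ≤ c) (h : ∀ x, ‖toEuclideanLin A x‖ ≤ c * ‖x‖) : ‖A‖ ≤ c :=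
  ContinuousLinearMap.opNorm_le_bound _ hc h

lemma l2_opNorm_transpose [Fintype m] [DecidableEq m] [Fintype n] [DecidableEq n]
    (A : Matrix m n ℝ) : ‖Aᵀ‖ = ‖A‖ := by
  rw [← conjTranspose_eq_transpose_of_trivial, l2_opNorm_conjTranspose]

lemma mul_l2_opNorm_le_l2_opNorm_mul [Fintype m] [Fintype n] [DecidableEq n] [Fintype p]
    [DecidableEq p] {A : Matrix m n ℝ} {c : ℝ} (hA : ∀ x, c * ‖x‖ ≤ ‖toEuclideanLin A x‖)
    (N : Matrix n p ℝ) : c * ‖N‖ ≤ ‖A * N‖ := by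
  rcases le_or_gt c 0 with hc | hc
  · exact (mul_nonpos_of_nonpos_of_nonneg hc (norm_nonneg _)).trans (norm_nonneg _)
  rw [mul_comm, ← le_div_iff₀ hc]
  refine l2_opNorm_le_of_forall (by positivity) fun x => ?_
  rw [div_mul_eq_mul_div, le_div_iff₀ hc, mul_comm]
  calc c * ‖toEuclideanLin N x‖ ≤ ‖toEuclideanLin A (toEuclideanLin N x)‖ := hA _
    _ = ‖toEuclideanLin (A * N) x‖ := by rw [toEuclideanLin_mul_apply]
    _ ≤ ‖A * N‖ * ‖x‖ := norm_toEuclideanLin_le _ _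

lemma forall_mul_norm_le_toEuclideanLin_transpose [Fintype n] [DecidableEq n]
    {A : Matrix n n ℝ} {c : ℝ} (hA : ∀ x, c * ‖x‖ ≤ ‖toEuclideanLin A x‖)
    (y : EuclideanSpace ℝ n) : c * ‖y‖ ≤ ‖toEuclideanLin Aᵀ y‖ := by
  rcases le_or_gt c 0 with hc | hc
  · exact (mul_nonpos_of_nonpos_of_nonneg hc (norm_nonneg _)).trans (norm_nonneg _)
  have hinj : Function.Injective (toEuclideanLin A) := by
    refine (injective_iff_map_eq_zero _).2 fun x hx => norm_le_zero_iff.1 ?_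
    have := hA x
    rw [hx, norm_zero] at this
    exact nonpos_of_mul_nonpos_right this hc
  obtain ⟨x, rfl⟩ := LinearMap.injective_iff_surjective.1 hinj y
  set y := toEuclideanLin A x
  have hsq : ‖y‖ ^ 2 ≤ ‖toEuclideanLin Aᵀ y‖ * ‖x‖ := by
    rw [← real_inner_self_eq_norm_sq, ← inner_toEuclideanLin_transpose]
    exact real_inner_le_norm _ _
  rcases (norm_nonneg y).eq_or_lt with hy | hy
  · rw [← hy, mul_zero]
    exact norm_nonneg _
  refine le_of_mul_le_mul_right ?_ hy
  calc c * ‖y‖ * ‖y‖ ≤ ‖toEuclideanLin Aᵀ y‖ * (c * ‖x‖) := by nlinarith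
    _ ≤ ‖toEuclideanLin Aᵀ y‖ * ‖y‖ := by gcongr; exact hA x

/-- Both sides are the sine of the largest principal angle between the column spaces of `U` and
`Uh`: with `t = ‖Û⊥ᵀ U‖ < 1`, the square matrices `ÛᵀU` and `UᵀÛ` are both bounded below by
`√(1 - t²)`. -/
theorem l2_opNorm_transpose_mul_le [Fintype m] [DecidableEq m] [Fintype n] [DecidableEq n]
    [Fintype p] [DecidableEq p] {U Uh : Matrix m n ℝ} {Up Uph : Matrix m p ℝ}
    (hU : Uᵀ * U = 1) (hUc : U * Uᵀ + Up * Upᵀ = 1)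
    (hUh : Uhᵀ * Uh = 1) (hUhc : Uh * Uhᵀ + Uph * Uphᵀ = 1) :
    ‖Upᵀ * Uh‖ ≤ ‖Uphᵀ * U‖ := by
  set t := ‖Uphᵀ * U‖
  have ht : 0 ≤ t := norm_nonneg _
  have hpyth := norm_toEuclideanLin_transpose_mul_sq_add hUc hUh
  have hpyth' := norm_toEuclideanLin_transpose_mul_sq_add hUhc hU
  rcases le_or_gt 1 t with h1t | h1t
  · refine (l2_opNorm_le_of_forall zero_le_one fun v => ?_).trans h1t
    rw [one_mul, ← sq_le_sq₀ (norm_nonneg _) (norm_nonneg _), ← hpyth v]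
    nlinarith
  set s := √(1 - t ^ 2)
  have hs : s ^ 2 = 1 - t ^ 2 := Real.sq_sqrt (by nlinarith)
  have hlow : ∀ w, s * ‖w‖ ≤ ‖toEuclideanLin (Uhᵀ * U) w‖ := fun w => by
    have hw := norm_toEuclideanLin_le (Uphᵀ * U) w
    rw [← sq_le_sq₀ (by positivity) (norm_nonneg _), mul_pow, hs]
    nlinarith [hpyth' w, pow_le_pow_left₀ (norm_nonneg _) hw 2]
  have hlow' : ∀ v, s * ‖v‖ ≤ ‖toEuclideanLin (Uᵀ * Uh) v‖ := by
    simpa using forall_mul_norm_le_toEuclideanLin_transpose hlow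
  refine l2_opNorm_le_of_forall ht fun v => ?_
  rw [← sq_le_sq₀ (norm_nonneg _) (by positivity), mul_pow]
  nlinarith [hpyth v, pow_le_pow_left₀ (by positivity) (hlow' v) 2]

lemma transpose_mul_eq_of_eq_add [Fintype m] [Fintype r] [DecidableEq r] [Fintype s] [Fintype p]
    [Fintype q] {M : Matrix m n ℝ} {U : Matrix m r ℝ} {A : Matrix r s ℝ} {V : Matrix n s ℝ}
    {Up : Matrix m p ℝ} {B : Matrix p q ℝ} {Vp : Matrix n q ℝ}
    (hM : M = U * A * Vᵀ + Up * B * Vpᵀ) (hU : Uᵀ * U = 1) (hUUp : Uᵀ * Up = 0) :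
    Uᵀ * M = A * Vᵀ := by
  simp only [hM, Matrix.mul_add, ← Matrix.mul_assoc, hU, hUUp, Matrix.one_mul, Matrix.zero_mul,
    add_zero]

lemma mul_eq_of_eq_add [Fintype n] [Fintype r] [Fintype s] [Fintype p] [Fintype q]
    [DecidableEq q] {M : Matrix m n ℝ} {U : Matrix m r ℝ} {A : Matrix r s ℝ} {V : Matrix n s ℝ}
    {Up : Matrix m p ℝ} {B : Matrix p q ℝ} {Vp : Matrix n q ℝ}
    (hM : M = U * A * Vᵀ + Up * B * Vpᵀ) (hVVp : Vᵀ * Vp = 0) (hVp : Vpᵀ * Vp = 1) :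
    M * Vp = Up * B := by
  simp only [hM, Matrix.add_mul, Matrix.mul_assoc, hVVp, hVp, Matrix.mul_zero, Matrix.mul_one,
    zero_add]

lemma transpose_eq_of_eq_add [Fintype r] [Fintype s] [Fintype p] [Fintype q]
    {M : Matrix m n ℝ} {U : Matrix m r ℝ} {A : Matrix r s ℝ} {V : Matrix n s ℝ}
    {Up : Matrix m p ℝ} {B : Matrix p q ℝ} {Vp : Matrix n q ℝ}
    (hM : M = U * A * Vᵀ + Up * B * Vpᵀ) : Mᵀ = V * Aᵀ * Uᵀ + Vp * Bᵀ * Upᵀ := by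
  simp only [hM, transpose_add, transpose_mul, transpose_transpose, Matrix.mul_assoc]

lemma mul_l2_opNorm_le_of_eq_add [Fintype m] [Fintype n] [Fintype r] [DecidableEq r]
    [Fintype s] [DecidableEq s] [Fintype p] [Fintype q] [Fintype p'] [DecidableEq p']
    [Fintype q'] [DecidableEq q']
    {M Δ : Matrix m n ℝ} {U : Matrix m r ℝ} {A : Matrix r s ℝ} {V : Matrix n s ℝ}
    {Up : Matrix m p ℝ} {B : Matrix p q ℝ} {Vp : Matrix n q ℝ}
    {Uh : Matrix m r ℝ} {Ah : Matrix r s ℝ} {Vh : Matrix n s ℝ}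
    {Uph : Matrix m p' ℝ} {Bh : Matrix p' q' ℝ} {Vph : Matrix n q' ℝ} {c : ℝ}
    (hM : M = U * A * Vᵀ + Up * B * Vpᵀ) (hMh : M + Δ = Uh * Ah * Vhᵀ + Uph * Bh * Vphᵀ)
    (hU : Uᵀ * U = 1) (hUUp : Uᵀ * Up = 0) (hVVph : Vhᵀ * Vph = 0) (hVph : Vphᵀ * Vph = 1)
    (hA : ∀ x, c * ‖x‖ ≤ ‖toEuclideanLin A x‖) :
    c * ‖Vᵀ * Vph‖ ≤ ‖Uᵀ * Uph‖ * ‖Bh‖ + ‖Uᵀ * Δ * Vph‖ := by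
  have key : A * (Vᵀ * Vph) = Uᵀ * Uph * Bh - Uᵀ * Δ * Vph := by
    rw [← Matrix.mul_assoc, ← transpose_mul_eq_of_eq_add hM hU hUUp, Matrix.mul_assoc,
      Matrix.mul_assoc, Matrix.mul_assoc, ← mul_eq_of_eq_add hMh hVVph hVph, Matrix.add_mul,
      Matrix.mul_add, add_sub_cancel_right]
  calc c * ‖Vᵀ * Vph‖ ≤ ‖A * (Vᵀ * Vph)‖ := mul_l2_opNorm_le_l2_opNorm_mul hA _
    _ ≤ ‖Uᵀ * Uph * Bh‖ + ‖Uᵀ * Δ * Vph‖ := key ▸ norm_sub_le _ _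
    _ ≤ ‖Uᵀ * Uph‖ * ‖Bh‖ + ‖Uᵀ * Δ * Vph‖ := by gcongr; exact l2_opNorm_mul _ _

end Matrix

lemma le_div_sq_sub_sq_of_coupled_le {a b x y e₁ e₂ : ℝ} (hb : 0 ≤ b) (hab : b < a)
    (hy : a * y ≤ x * b + e₁) (hx : a * x ≤ y * b + e₂) :
    x ≤ (b * e₁ + a * e₂) / (a ^ 2 - b ^ 2) := by
  rw [le_div_iff₀ (by nlinarith)]
  nlinarith [mul_le_mul_of_nonneg_left hy hb, mul_le_mul_of_nonneg_left hx (hb.trans hab.le)]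

lemma div_sq_sub_sq_le_max_div_sub {a b e₁ e₂ : ℝ} (hb : 0 ≤ b) (hab : b < a) :
    (b * e₁ + a * e₂) / (a ^ 2 - b ^ 2) ≤ max e₁ e₂ / (a - b) := by
  have hsq : a ^ 2 - b ^ 2 = (a + b) * (a - b) := by ring
  rw [hsq, ← div_div, div_le_div_iff_of_pos_right (by linarith), div_le_iff₀ (by linarith)]
  nlinarith [le_max_left e₁ e₂, le_max_right e₁ e₂]

theorem stmt_4_general (d₁ d₂ r : ℕ)
    (M Δ : Matrix (Fin d₁) (Fin d₂) ℝ)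
    (U : Matrix (Fin d₁) (Fin r) ℝ) (Up : Matrix (Fin d₁) (Fin (d₁ - r)) ℝ)
    (V : Matrix (Fin d₂) (Fin r) ℝ) (Vp : Matrix (Fin d₂) (Fin (d₂ - r)) ℝ)
    (hU : Uᵀ * U = 1) (hUUp : Uᵀ * Up = 0)
    (hUcomplete : U * Uᵀ + Up * Upᵀ = 1)
    (hV : Vᵀ * V = 1) (hVVp : Vᵀ * Vp = 0)
    (A : Matrix (Fin r) (Fin r) ℝ) (B : Matrix (Fin (d₁ - r)) (Fin (d₂ - r)) ℝ)
    (lr : ℝ)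
    (hM : M = U * A * Vᵀ + Up * B * Vpᵀ)
    (hA : ∀ x : EuclideanSpace ℝ (Fin r), lr * ‖x‖ ≤ ‖Matrix.toEuclideanLin A x‖)
    (Uh : Matrix (Fin d₁) (Fin r) ℝ) (Uph : Matrix (Fin d₁) (Fin (d₁ - r)) ℝ)
    (Vh : Matrix (Fin d₂) (Fin r) ℝ) (Vph : Matrix (Fin d₂) (Fin (d₂ - r)) ℝ)
    (hUh : Uhᵀ * Uh = 1) (hUph : Uphᵀ * Uph = 1) (hUUph : Uhᵀ * Uph = 0)
    (hUhcomplete : Uh * Uhᵀ + Uph * Uphᵀ = 1)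
    (hVph : Vphᵀ * Vph = 1) (hVVph : Vhᵀ * Vph = 0)
    (Ah : Matrix (Fin r) (Fin r) ℝ) (Bh : Matrix (Fin (d₁ - r)) (Fin (d₂ - r)) ℝ)
    (hMh : M + Δ = Uh * Ah * Vhᵀ + Uph * Bh * Vphᵀ)
    (hgap : ‖Bh‖ < lr) :
    ‖Upᵀ * Uh‖ ≤ (‖Bh‖ * ‖Uᵀ * Δ * Vph‖ + lr * ‖Uphᵀ * Δ * V‖) / (lr ^ 2 - ‖Bh‖ ^ 2) ∧
    ‖Upᵀ * Uh‖ ≤ max ‖Uᵀ * Δ * Vph‖ ‖Uphᵀ * Δ * V‖ / (lr - ‖Bh‖) := by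
  have hV_side := mul_l2_opNorm_le_of_eq_add hM hMh hU hUUp hVVph hVph hA
  have hU_side := mul_l2_opNorm_le_of_eq_add (transpose_eq_of_eq_add hM)
    (by rw [← transpose_add]; exact transpose_eq_of_eq_add hMh) hV hVVp hUUph hUph
    (forall_mul_norm_le_toEuclideanLin_transpose hA)
  have hε₂ : ‖Vᵀ * Δᵀ * Uph‖ = ‖Uphᵀ * Δ * V‖ := by
    rw [← l2_opNorm_transpose]
    simp only [transpose_mul, transpose_transpose, Matrix.mul_assoc]
  have hsin : ‖Upᵀ * Uh‖ ≤ ‖Uᵀ * Uph‖ := by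
    rw [← l2_opNorm_transpose (Uᵀ * Uph), transpose_mul, transpose_transpose]
    exact l2_opNorm_transpose_mul_le hU hUcomplete hUh hUhcomplete
  rw [l2_opNorm_transpose, hε₂] at hU_side
  have hbound := hsin.trans
    (le_div_sq_sub_sq_of_coupled_le (norm_nonneg Bh) hgap hV_side hU_side)
  exact ⟨hbound, hbound.trans (div_sq_sub_sq_le_max_div_sub (norm_nonneg Bh) hgap)⟩

/-- **Lemma B.2** (improved Wedin `sin Θ` perturbation bound, spectral norm version).
`M = U A Vᵀ + U⊥ B V⊥ᵀ` is a singular-value-type block decomposition of `M` where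
`[U, U⊥]` and `[V, V⊥]` are orthogonal (expressed by the orthonormality, orthogonality and
completeness relations below), every singular value of `A` is at least `λr`
(expressed as `λr ‖x‖ ≤ ‖A x‖` for all `x`), and similarly
`M̂ = M + Δ = Û Â V̂ᵀ + Û⊥ B̂ V̂⊥ᵀ` with every singular value of `Â` at least
`λ̂ = ‖B̂‖₂`.  With `ε₁ = ‖Uᵀ Δ V̂⊥‖₂`, `ε₂ = ‖Û⊥ᵀ Δ V‖₂` and `λr > λ̂`,
`‖U⊥ᵀ Û‖₂ ≤ (λ̂ ε₁ + λr ε₂)/(λr² − λ̂²) ≤ max(ε₁, ε₂)/(λr − λ̂)`. -/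
theorem stmt_4 (d₁ d₂ r : ℕ) (hr : 1 ≤ r) (hr₁ : r ≤ d₁) (hr₂ : r ≤ d₂)
    (M Δ : Matrix (Fin d₁) (Fin d₂) ℝ)
    (U : Matrix (Fin d₁) (Fin r) ℝ) (Up : Matrix (Fin d₁) (Fin (d₁ - r)) ℝ)
    (V : Matrix (Fin d₂) (Fin r) ℝ) (Vp : Matrix (Fin d₂) (Fin (d₂ - r)) ℝ)
    (hU : Uᵀ * U = 1) (hUp : Upᵀ * Up = 1) (hUUp : Uᵀ * Up = 0)
    (hUcomplete : U * Uᵀ + Up * Upᵀ = 1)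
    (hV : Vᵀ * V = 1) (hVp : Vpᵀ * Vp = 1) (hVVp : Vᵀ * Vp = 0)
    (hVcomplete : V * Vᵀ + Vp * Vpᵀ = 1)
    (A : Matrix (Fin r) (Fin r) ℝ) (B : Matrix (Fin (d₁ - r)) (Fin (d₂ - r)) ℝ)
    (lr : ℝ)
    (hM : M = U * A * Vᵀ + Up * B * Vpᵀ)
    (hA : ∀ x : EuclideanSpace ℝ (Fin r), lr * ‖x‖ ≤ ‖Matrix.toEuclideanLin A x‖)
    (Uh : Matrix (Fin d₁) (Fin r) ℝ) (Uph : Matrix (Fin d₁) (Fin (d₁ - r)) ℝ)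
    (Vh : Matrix (Fin d₂) (Fin r) ℝ) (Vph : Matrix (Fin d₂) (Fin (d₂ - r)) ℝ)
    (hUh : Uhᵀ * Uh = 1) (hUph : Uphᵀ * Uph = 1) (hUUph : Uhᵀ * Uph = 0)
    (hUhcomplete : Uh * Uhᵀ + Uph * Uphᵀ = 1)
    (hVh : Vhᵀ * Vh = 1) (hVph : Vphᵀ * Vph = 1) (hVVph : Vhᵀ * Vph = 0)
    (hVhcomplete : Vh * Vhᵀ + Vph * Vphᵀ = 1)
    (Ah : Matrix (Fin r) (Fin r) ℝ) (Bh : Matrix (Fin (d₁ - r)) (Fin (d₂ - r)) ℝ)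
    (hMh : M + Δ = Uh * Ah * Vhᵀ + Uph * Bh * Vphᵀ)
    (hAh : ∀ x : EuclideanSpace ℝ (Fin r), ‖Bh‖ * ‖x‖ ≤ ‖Matrix.toEuclideanLin Ah x‖)
    (hgap : ‖Bh‖ < lr) :
    ‖Upᵀ * Uh‖ ≤ (‖Bh‖ * ‖Uᵀ * Δ * Vph‖ + lr * ‖Uphᵀ * Δ * V‖) / (lr ^ 2 - ‖Bh‖ ^ 2) ∧
    ‖Upᵀ * Uh‖ ≤ max ‖Uᵀ * Δ * Vph‖ ‖Uphᵀ * Δ * V‖ / (lr - ‖Bh‖) :=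
  stmt_4_general d₁ d₂ r M Δ U Up V Vp hU hUUp hUcomplete hV hVVp A B lr hM hA Uh Uph Vh Vph hUh
    hUph hUUph hUhcomplete hVph hVVph Ah Bh hMh hgap
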